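/- arXiv:2009.02854 — 3 statements merged into one kernel-verified Lean document; each statement's English description precedes it below -/
import Mathlib

section
/- Let h₀ : ℝ^d → ℝ be differentiable with ‖∇h₀(x)‖ ≤ M for all x, let θ₀ ∈ ℝ^d with ‖θ₀‖ = 1, and suppose that for every y, h₀(y) ≥ 0 iff y·θ₀ ≥ 0. Then for any δ > 0 and any x with |x·θ₀| ≤ δ, we have |h₀(x)| ≤ M·δ. -/
/-!
At the orthogonal projection `p` of `x` onto the hyperplane `θ₀ᗮ`, `h₀` is nonnegative, yet it is
negative on the open half-line `p - t θ₀`, `t > 0`; by continuity `h₀ p = 0`. The mean value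
inequality then gives `|h₀ x| = |h₀ x - h₀ p| ≤ M ‖x - p‖ = M |⟪x, θ₀⟫| ≤ M δ`.
-/

open scoped RealInnerProductSpace Topology

theorem Real.eq_zero_of_nonneg_iff_nonneg {φ : ℝ → ℝ} (hφ : Continuous φ)
    (hsign : ∀ t, 0 ≤ φ t ↔ 0 ≤ t) : φ 0 = 0 := by
  refine le_antisymm ?_ ((hsign 0).2 le_rfl)
  have hlim : Filter.Tendsto φ (𝓝[<] 0) (𝓝 (φ 0)) := hφ.continuousWithinAt.tendsto
  refine le_of_tendsto hlim ?_
  filter_upwards [self_mem_nhdsWithin] with t (ht : t < 0)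
  exact (not_le.1 fun h ↦ ht.not_ge ((hsign t).1 h)).le

section InnerProductSpace

variable {E : Type*} [NormedAddCommGroup E] [InnerProductSpace ℝ E]

theorem eq_zero_of_nonneg_iff_inner_nonneg {f : E → ℝ} (hf : Continuous f) {θ : E} (hθ : θ ≠ 0)
    (hsign : ∀ y, 0 ≤ f y ↔ 0 ≤ ⟪y, θ⟫) {p : E} (hp : ⟪p, θ⟫ = 0) : f p = 0 := by
  have hline : ∀ t : ℝ, ⟪p + t • θ, θ⟫ = t * ‖θ‖ ^ 2 := fun t ↦ by
    rw [inner_add_left, real_inner_smul_left, real_inner_self_eq_norm_sq, hp, zero_add]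
  have hθpos : 0 < ‖θ‖ ^ 2 := by positivity
  simpa using Real.eq_zero_of_nonneg_iff_nonneg (φ := fun t : ℝ ↦ f (p + t • θ)) (by fun_prop)
    fun t ↦ by rw [hsign, hline, mul_nonneg_iff_of_pos_right hθpos]

theorem inner_sub_inner_smul_self {x θ : E} (hθ : ‖θ‖ = 1) : ⟪x - ⟪x, θ⟫ • θ, θ⟫ = 0 := by
  rw [inner_sub_left, real_inner_smul_left, real_inner_self_eq_norm_sq, hθ]
  ring

theorem norm_fderiv_eq_norm_gradient [CompleteSpace E] (f : E → ℝ) (x : E) :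
    ‖fderiv ℝ f x‖ = ‖gradient f x‖ :=
  ((InnerProductSpace.toDual ℝ E).symm.norm_map (fderiv ℝ f x)).symm

theorem abs_sub_le_of_norm_gradient_le [CompleteSpace E] {f : E → ℝ} (hf : Differentiable ℝ f)
    {M : ℝ} (hM : ∀ x, ‖gradient f x‖ ≤ M) (x y : E) : |f x - f y| ≤ M * ‖x - y‖ :=
  convex_univ.norm_image_sub_le_of_norm_fderiv_le (fun z _ ↦ hf z)
    (fun z _ ↦ (norm_fderiv_eq_norm_gradient f z).trans_le (hM z)) trivial trivial

end InnerProductSpace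

theorem tsms_h0_small_near_hyperplane_general {d : ℕ} (M : ℝ)
    (h₀ : EuclideanSpace ℝ (Fin d) → ℝ) (hdiff : Differentiable ℝ h₀)
    (hgrad : ∀ x, ‖gradient h₀ x‖ ≤ M)
    (θ₀ : EuclideanSpace ℝ (Fin d)) (hθ₀ : ‖θ₀‖ = 1)
    (hsign : ∀ y, 0 ≤ h₀ y ↔ 0 ≤ ⟪y, θ₀⟫)
    (δ : ℝ) (x : EuclideanSpace ℝ (Fin d)) (hx : |⟪x, θ₀⟫| ≤ δ) :
    |h₀ x| ≤ M * δ := by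
  set p := x - ⟪x, θ₀⟫ • θ₀
  have hθ₀_ne : θ₀ ≠ 0 := norm_ne_zero_iff.1 (hθ₀ ▸ one_ne_zero)
  have hp : h₀ p = 0 :=
    eq_zero_of_nonneg_iff_inner_nonneg hdiff.continuous hθ₀_ne hsign (inner_sub_inner_smul_self hθ₀)
  have hxp : ‖x - p‖ = |⟪x, θ₀⟫| := by simp [p, norm_smul, hθ₀]
  have hM : 0 ≤ M := (norm_nonneg _).trans (hgrad x)
  calc |h₀ x| = |h₀ x - h₀ p| := by rw [hp, sub_zero]
    _ ≤ M * ‖x - p‖ := abs_sub_le_of_norm_gradient_le hdiff hgrad x p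
    _ ≤ M * δ := by rw [hxp]; exact mul_le_mul_of_nonneg_left hx hM

/-- If `h₀` is differentiable with `‖∇h₀‖ ≤ M`, `θ₀` is a unit vector,
`h₀(y) ≥ 0 ↔ y ⬝ θ₀ ≥ 0`, and `|x ⬝ θ₀| ≤ δ`, then `|h₀(x)| ≤ M δ`. -/
theorem tsms_h0_small_near_hyperplane {d : ℕ} (M : ℝ)
    (h₀ : EuclideanSpace ℝ (Fin d) → ℝ) (hdiff : Differentiable ℝ h₀)
    (hgrad : ∀ x, ‖gradient h₀ x‖ ≤ M)
    (θ₀ : EuclideanSpace ℝ (Fin d)) (hθ₀ : ‖θ₀‖ = 1)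
    (hsign : ∀ y, 0 ≤ h₀ y ↔ 0 ≤ ⟪y, θ₀⟫)
    (δ : ℝ) (hδ : 0 < δ) (x : EuclideanSpace ℝ (Fin d)) (hx : |⟪x, θ₀⟫| ≤ δ) :
    |h₀ x| ≤ M * δ :=
  tsms_h0_small_near_hyperplane_general M h₀ hdiff hgrad θ₀ hθ₀ hsign δ x hx
end

section
/- Let θ, θ₀ ∈ ℝ^d with ‖θ₀‖ = 1, let x ∈ ℝ^d with ‖x‖ ≤ 1, and let h₀ : ℝ^d → ℝ be differentiable with ‖∇h₀‖ bounded by M and satisfying h₀(y) ≥ 0 iff y·θ₀ ≥ 0 for all y. Then |h₀(x)| · |𝟙{x·θ ≥ 0} − 𝟙{x·θ₀ ≥ 0}| ≤ M‖θ − θ₀‖. -/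
/-!
If the two indicators differ, `⟪x, θ⟫` and `⟪x, θ₀⟫` have different signs, so
`|⟪x, θ₀⟫| ≤ |⟪x, θ - θ₀⟫| ≤ ‖θ - θ₀‖`. The sign condition forces `h₀` to vanish on the
hyperplane `θ₀ᗮ` (it is `≥ 0` there and `< 0` just below it), so the mean value inequality
from the orthogonal projection of `x` onto that hyperplane gives `|h₀ x| ≤ M |⟪x, θ₀⟫|`.
-/

open scoped RealInnerProductSpace Topology

open Filter

theorem abs_le_abs_sub_of_not_iff {a b : ℝ} (h : ¬(0 ≤ a ↔ 0 ≤ b)) : |b| ≤ |a - b| := by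
  rcases le_or_gt 0 a with ha | ha <;> rcases le_or_gt 0 b with hb | hb
  · exact absurd (iff_of_true ha hb) h
  · rw [abs_of_neg hb, abs_of_nonneg (by linarith)]; linarith
  · rw [abs_of_nonneg hb, abs_of_neg (by linarith)]; linarith
  · exact absurd (iff_of_false ha.not_ge hb.not_ge) h

theorem norm_gradient_eq_norm_fderiv {F : Type*} [NormedAddCommGroup F] [InnerProductSpace ℝ F]
    [CompleteSpace F] (f : F → ℝ) (x : F) : ‖gradient f x‖ = ‖fderiv ℝ f x‖ := by
  rw [← toDual_gradient, LinearIsometryEquiv.norm_map]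

section

variable {E : Type*} [NormedAddCommGroup E] [InnerProductSpace ℝ E]

theorem abs_inner_le_norm_sub_of_not_iff {x θ θ₀ : E} (hx : ‖x‖ ≤ 1)
    (h : ¬(0 ≤ ⟪x, θ⟫ ↔ 0 ≤ ⟪x, θ₀⟫)) : |⟪x, θ₀⟫| ≤ ‖θ - θ₀‖ :=
  calc |⟪x, θ₀⟫| ≤ |⟪x, θ⟫ - ⟪x, θ₀⟫| := abs_le_abs_sub_of_not_iff h
    _ = |⟪x, θ - θ₀⟫| := by rw [inner_sub_right]
    _ ≤ ‖x‖ * ‖θ - θ₀‖ := abs_real_inner_le_norm _ _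
    _ ≤ ‖θ - θ₀‖ := mul_le_of_le_one_left (norm_nonneg _) hx

theorem eq_zero_of_inner_eq_zero_of_nonneg_iff {h : E → ℝ} {u z : E} (hu : u ≠ 0)
    (hh : ContinuousAt h z) (hsign : ∀ y, 0 ≤ h y ↔ 0 ≤ ⟪y, u⟫) (hz : ⟪z, u⟫ = 0) :
    h z = 0 := by
  refine le_antisymm ?_ ((hsign z).2 hz.ge)
  have hlim : Tendsto (fun t : ℝ => h (z - t • u)) (𝓝[>] 0) (𝓝 (h z)) := by
    refine (hh.tendsto.comp ?_).mono_left nhdsWithin_le_nhds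
    exact (by fun_prop : Continuous fun t : ℝ => z - t • u).tendsto' 0 z (by simp)
  refine le_of_tendsto hlim (eventually_nhdsWithin_of_forall fun t (ht : 0 < t) => ?_)
  have : ⟪z - t • u, u⟫ < 0 := by
    rw [inner_sub_left, hz, real_inner_smul_left, real_inner_self_eq_norm_sq]
    have := mul_pos ht (pow_pos (norm_pos_iff.2 hu) 2)
    linarith
  exact (not_le.1 fun h' => this.not_ge ((hsign _).1 h')).le

theorem abs_le_mul_abs_inner_of_nonneg_iff {h : E → ℝ} {u : E} {M : ℝ} (hu : ‖u‖ = 1)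
    (hh : Differentiable ℝ h) (hM : ∀ y, ‖fderiv ℝ h y‖ ≤ M)
    (hsign : ∀ y, 0 ≤ h y ↔ 0 ≤ ⟪y, u⟫) (x : E) : |h x| ≤ M * |⟪x, u⟫| := by
  set z := x - ⟪x, u⟫ • u
  have hz : ⟪z, u⟫ = 0 := by
    rw [inner_sub_left, real_inner_smul_left, real_inner_self_eq_norm_sq, hu]
    ring
  have hhz : h z = 0 := eq_zero_of_inner_eq_zero_of_nonneg_iff
    (ne_zero_of_norm_ne_zero (by simp [hu])) hh.continuous.continuousAt hsign hz
  have hxz : ‖x - z‖ = |⟪x, u⟫| := by simp [z, norm_smul, hu]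
  calc |h x| = ‖h x - h z‖ := by rw [hhz, sub_zero, Real.norm_eq_abs]
    _ ≤ M * ‖x - z‖ := convex_univ.norm_image_sub_le_of_norm_fderiv_le
        (fun y _ => hh y) (fun y _ => hM y) (Set.mem_univ z) (Set.mem_univ x)
    _ = M * |⟪x, u⟫| := by rw [hxz]

end

/-- Under the gradient bound and the sign-crossing condition on `h₀`,
`|h₀(x)| · |𝟙{x⬝θ ≥ 0} − 𝟙{x⬝θ₀ ≥ 0}| ≤ M ‖θ − θ₀‖` whenever `‖x‖ ≤ 1`. -/
theorem tsms_weighted_indicator_bound {d : ℕ} (M : ℝ)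
    (θ θ₀ : EuclideanSpace ℝ (Fin d)) (hθ₀ : ‖θ₀‖ = 1)
    (x : EuclideanSpace ℝ (Fin d)) (hx : ‖x‖ ≤ 1)
    (h₀ : EuclideanSpace ℝ (Fin d) → ℝ) (hdiff : Differentiable ℝ h₀)
    (hgrad : ∀ y, ‖gradient h₀ y‖ ≤ M)
    (hsign : ∀ y, 0 ≤ h₀ y ↔ 0 ≤ ⟪y, θ₀⟫) :
    |h₀ x| * |(if 0 ≤ ⟪x, θ⟫ then (1 : ℝ) else 0) - (if 0 ≤ ⟪x, θ₀⟫ then (1 : ℝ) else 0)|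
      ≤ M * ‖θ - θ₀‖ := by
  have hfderiv (y) : ‖fderiv ℝ h₀ y‖ ≤ M := norm_gradient_eq_norm_fderiv h₀ y ▸ hgrad y
  have hM : 0 ≤ M := (norm_nonneg _).trans (hfderiv 0)
  by_cases hsame : 0 ≤ ⟪x, θ⟫ ↔ 0 ≤ ⟪x, θ₀⟫
  · rw [if_congr hsame rfl rfl, sub_self, abs_zero, mul_zero]
    positivity
  have hind :
      |(if 0 ≤ ⟪x, θ⟫ then (1 : ℝ) else 0) - (if 0 ≤ ⟪x, θ₀⟫ then (1 : ℝ) else 0)| ≤ 1 := by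
    split_ifs <;> norm_num
  calc _ ≤ |h₀ x| := mul_le_of_le_one_right (abs_nonneg _) hind
    _ ≤ M * |⟪x, θ₀⟫| := abs_le_mul_abs_inner_of_nonneg_iff hθ₀ hdiff hfderiv hsign x
    _ ≤ M * ‖θ - θ₀‖ := by gcongr; exact abs_inner_le_norm_sub_of_not_iff hx hsame
end

section
/- Let X be uniform on the open unit ball of ℝ^d, let θ₀ ∈ ℝ^d with ‖θ₀‖ = 1, let h₀ : ℝ^d → ℝ be measurable and bounded by M with h₀(x) ≥ 0 iff x·θ₀ ≥ 0, and with Lipschitz constant M, and let C := M·(surface area constant). Then for all θ with ‖θ − θ₀‖ = δ ≤ 1, E[h₀(X)²·|𝟙{X·θ ≥ 0} − 𝟙{X·θ₀ ≥ 0}|] ≤ C·δ³. -/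
/-!
Where the indicators of `θ` and `θ₀` disagree, `|⟪x, θ₀⟫| ≤ |⟪x, θ - θ₀⟫| ≤ δ` on the unit ball.
Since `h₀` changes sign exactly across the hyperplane `θ₀ᗮ`, it vanishes there, so the Lipschitz
bound gives `|h₀ x| ≤ M |⟪x, θ₀⟫| ≤ M δ` on that event. The event lies in a slab of width `2δ`,
which after rotating `θ₀` to a coordinate vector meets the unit ball inside a box of volume
`2ᵈ δ`. The integrand is thus at most `(M δ)²` on a set of measure `O(δ)`.
-/

open MeasureTheory Filter Set Metric
open scoped RealInnerProductSpace NNReal ENNReal Topology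

theorem Real.nonneg_iff_nonneg_of_abs_sub_lt_abs {a b : ℝ} (h : |a - b| < |b|) :
    0 ≤ a ↔ 0 ≤ b := by
  rcases abs_lt.1 h with ⟨h₁, h₂⟩
  constructor <;> intro h₀ <;> by_contra! hneg
  · rw [abs_of_neg hneg] at h₁ h₂; linarith
  · rw [abs_of_nonneg h₀] at h₁ h₂; linarith

section SignLipschitz

variable {E : Type*} [NormedAddCommGroup E] [InnerProductSpace ℝ E] {h : E → ℝ} {u : E}

theorem apply_eq_zero_of_inner_eq_zero (hh : Continuous h) (hu : u ≠ 0)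
    (hsign : ∀ x, 0 ≤ h x ↔ 0 ≤ ⟪x, u⟫) {y : E} (hy : ⟪y, u⟫ = 0) : h y = 0 := by
  refine le_antisymm ?_ ((hsign y).2 hy.ge)
  -- approach `y` from the negative side of the hyperplane `⟪·, u⟫ = 0`
  have hlim : Tendsto (fun t : ℝ => h (y - t • u)) (𝓝[>] 0) (𝓝 (h y)) := by
    refine Tendsto.mono_left ?_ nhdsWithin_le_nhds
    exact (hh.comp (by fun_prop : Continuous fun t : ℝ => y - t • u)).tendsto' 0 (h y) (by simp)
  refine le_of_tendsto hlim (eventually_nhdsWithin_of_forall fun t (ht : 0 < t) => ?_)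
  by_contra! hpos
  have := (hsign _).1 hpos.le
  rw [inner_sub_left, hy, real_inner_smul_left, real_inner_self_eq_norm_sq] at this
  linarith [mul_pos ht (pow_pos (norm_pos_iff.2 hu) 2)]

theorem abs_le_mul_abs_inner_of_lipschitzWith {K : ℝ≥0} (hlip : LipschitzWith K h)
    (hu : ‖u‖ = 1) (hsign : ∀ x, 0 ≤ h x ↔ 0 ≤ ⟪x, u⟫) (x : E) : |h x| ≤ K * |⟪x, u⟫| := by
  set y := x - ⟪x, u⟫ • u
  have hy : ⟪y, u⟫ = 0 := by
    rw [inner_sub_left, real_inner_smul_left, real_inner_self_eq_norm_sq, hu]; ring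
  have hzero : h y = 0 :=
    apply_eq_zero_of_inner_eq_zero hlip.continuous (norm_ne_zero_iff.1 (by simp [hu])) hsign hy
  calc |h x| = dist (h x) (h y) := by rw [hzero, Real.dist_eq, sub_zero]
    _ ≤ K * dist x y := hlip.dist_le_mul x y
    _ = K * |⟪x, u⟫| := by simp [y, norm_smul, hu]

end SignLipschitz

theorem exists_linearIsometryEquiv_apply_eq {E : Type*} [NormedAddCommGroup E]
    [InnerProductSpace ℝ E] {u v : E} (h : ‖u‖ = ‖v‖) : ∃ L : E ≃ₗᵢ[ℝ] E, L u = v :=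
  ⟨_, Submodule.reflection_sub h⟩

theorem volume_ball_inter_setOf_abs_apply_le {d : ℕ} (i : Fin d) (δ : ℝ) :
    volume (ball (0 : EuclideanSpace ℝ (Fin d)) 1 ∩ {x | |x i| ≤ δ}) ≤
      ENNReal.ofReal (2 ^ d * δ) := by
  classical
  set T : Set (Fin d → ℝ) := univ.pi (Function.update (fun _ => Icc (-1) 1) i (Icc (-δ) δ))
  have hsub : ball (0 : EuclideanSpace ℝ (Fin d)) 1 ∩ {x | |x i| ≤ δ} ⊆
      (MeasurableEquiv.toLp 2 (Fin d → ℝ)).symm ⁻¹' T := by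
    rintro x ⟨hx, hxi⟩ j -
    rcases eq_or_ne j i with rfl | hj
    · simpa using abs_le.1 hxi
    · simpa [hj] using abs_le.1 ((PiLp.norm_apply_le x j).trans (mem_ball_zero_iff.1 hx).le)
  have hT : MeasurableSet T := MeasurableSet.univ_pi fun j => by
    rw [Function.update_apply]; split_ifs <;> exact measurableSet_Icc
  have hcard : (Finset.univ \ {i} : Finset (Fin d)).card = d - 1 := by
    rw [Finset.card_sdiff]; simp
  have hpow : (2 : ℝ) ^ d * δ = 2 ^ (d - 1) * (2 * δ) := by
    rw [← mul_assoc, ← pow_succ, Nat.sub_add_cancel (Fin.pos i)]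
  calc _ ≤ volume ((MeasurableEquiv.toLp 2 (Fin d → ℝ)).symm ⁻¹' T) := measure_mono hsub
    _ = volume T := (EuclideanSpace.volume_preserving_symm_measurableEquiv_toLp
          (Fin d)).measure_preimage hT.nullMeasurableSet
    _ = ENNReal.ofReal (2 ^ d * δ) := by
      rw [volume_pi_pi,
        show (fun j => volume (Function.update (fun _ => Icc (-1 : ℝ) 1) i (Icc (-δ) δ) j)) =
        Function.update (fun _ => volume (Icc (-1 : ℝ) 1)) i (volume (Icc (-δ) δ)) from
        funext fun j => Function.apply_update (fun _ => volume) _ i _ j,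
        Finset.prod_update_of_mem (Finset.mem_univ i), Finset.prod_const, hcard,
        Real.volume_Icc, Real.volume_Icc, hpow, ENNReal.ofReal_mul (by positivity),
        ENNReal.ofReal_pow zero_le_two, mul_comm]
      norm_num [two_mul]

theorem volume_ball_inter_setOf_abs_inner_le {d : ℕ} {u : EuclideanSpace ℝ (Fin d)}
    (hu : ‖u‖ = 1) (δ : ℝ) :
    volume (ball (0 : EuclideanSpace ℝ (Fin d)) 1 ∩ {x | |⟪x, u⟫| ≤ δ}) ≤
      ENNReal.ofReal (2 ^ d * δ) := by
  obtain ⟨i⟩ : Nonempty (Fin d) := by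
    by_contra h
    rw [not_nonempty_iff] at h
    simp [Subsingleton.elim u 0] at hu
  obtain ⟨L, hL⟩ := exists_linearIsometryEquiv_apply_eq
    (u := u) (v := EuclideanSpace.single i 1) (by simp [hu])
  have hpre : ball 0 1 ∩ {x | |⟪x, u⟫| ≤ δ} = L ⁻¹' (ball 0 1 ∩ {x | |x i| ≤ δ}) := by
    have hcoord : ∀ x, L x i = ⟪x, u⟫ := fun x => by
      rw [← L.inner_map_map, hL, EuclideanSpace.inner_single_right, one_mul, conj_trivial]
    ext x
    simp [hcoord]
  rw [hpre, L.measurePreserving.measure_preimage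
    (measurableSet_ball.inter (measurableSet_le (by fun_prop) measurable_const)).nullMeasurableSet]
  exact volume_ball_inter_setOf_abs_apply_le i δ

theorem setIntegral_le_measureReal_inter_mul {α : Type*} [MeasurableSpace α] {μ : Measure α}
    {s t : Set α} {f : α → ℝ} {c : ℝ} (hs : MeasurableSet s) (ht : MeasurableSet t)
    (hst : μ (s ∩ t) ≠ ∞) (hf₀ : ∀ x, 0 ≤ f x) (hf : ∀ x ∈ t, f x ≤ s.indicator (fun _ => c) x) :
    ∫ x in t, f x ∂μ ≤ μ.real (s ∩ t) * c := by
  have hint : Integrable (s.indicator fun _ => c) (μ.restrict t) :=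
    (integrable_indicator_iff hs).2 (integrableOn_const (by rwa [Measure.restrict_apply hs]))
  calc ∫ x in t, f x ∂μ ≤ ∫ x in t, s.indicator (fun _ => c) x ∂μ :=
        integral_mono_of_nonneg (Eventually.of_forall hf₀) hint (ae_restrict_of_forall_mem ht hf)
    _ = μ.real (s ∩ t) * c := by
      rw [integral_indicator_const _ hs, measureReal_restrict_apply hs, smul_eq_mul]

theorem sq_mul_abs_ite_sub_ite_le_indicator {E : Type*} [NormedAddCommGroup E]
    [InnerProductSpace ℝ E] {h : E → ℝ} {K : ℝ} {θ θ₀ x : E} (hK : 0 ≤ K)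
    (hh : |h x| ≤ K * |⟪x, θ₀⟫|) (hx : ‖x‖ ≤ 1) :
    h x ^ 2 * |(if 0 ≤ ⟪x, θ⟫ then (1 : ℝ) else 0) - (if 0 ≤ ⟪x, θ₀⟫ then 1 else 0)| ≤
      {x | |⟪x, θ₀⟫| ≤ ‖θ - θ₀‖}.indicator (fun _ => (K * ‖θ - θ₀‖) ^ 2) x := by
  set δ := ‖θ - θ₀‖
  by_cases hxS : |⟪x, θ₀⟫| ≤ δ
  · rw [indicator_of_mem (show x ∈ {x | |⟪x, θ₀⟫| ≤ δ} from hxS)]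
    have hsq : h x ^ 2 ≤ (K * δ) ^ 2 := by
      rw [← sq_abs]
      exact pow_le_pow_left₀ (abs_nonneg _) (hh.trans (by gcongr)) 2
    have hind : |(if 0 ≤ ⟪x, θ⟫ then (1 : ℝ) else 0) - (if 0 ≤ ⟪x, θ₀⟫ then 1 else 0)| ≤ 1 := by
      split_ifs <;> norm_num
    simpa using mul_le_mul hsq hind (abs_nonneg _) (sq_nonneg _)
  · rw [indicator_of_notMem (show x ∉ {x | |⟪x, θ₀⟫| ≤ δ} from hxS)]
    have hclose : |⟪x, θ⟫ - ⟪x, θ₀⟫| < |⟪x, θ₀⟫| := by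
      rw [← inner_sub_right]
      calc |⟪x, θ - θ₀⟫| ≤ ‖x‖ * δ := abs_real_inner_le_norm _ _
        _ ≤ δ := mul_le_of_le_one_left (norm_nonneg _) hx
        _ < |⟪x, θ₀⟫| := not_le.1 hxS
    rw [if_congr (Real.nonneg_iff_nonneg_of_abs_sub_lt_abs hclose) rfl rfl, sub_self, abs_zero,
      mul_zero]

theorem tsms_envelope_cubic_bound_general {d : ℕ} (M : ℝ) (hM : 0 < M)
    (θ₀ : EuclideanSpace ℝ (Fin d)) (hθ₀ : ‖θ₀‖ = 1)
    (h₀ : EuclideanSpace ℝ (Fin d) → ℝ)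
    (hsign : ∀ x, 0 ≤ h₀ x ↔ 0 ≤ ⟪x, θ₀⟫)
    (hlip : LipschitzWith (Real.toNNReal M) h₀) :
    ∃ C : ℝ, 0 < C ∧ ∀ θ : EuclideanSpace ℝ (Fin d), ‖θ - θ₀‖ ≤ 1 →
      (∫ x, h₀ x ^ 2 *
          |(if 0 ≤ ⟪x, θ⟫ then (1 : ℝ) else 0) - (if 0 ≤ ⟪x, θ₀⟫ then (1 : ℝ) else 0)|
        ∂((volume (Metric.ball (0 : EuclideanSpace ℝ (Fin d)) 1))⁻¹ •
            volume.restrict (Metric.ball (0 : EuclideanSpace ℝ (Fin d)) 1)))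
        ≤ C * ‖θ - θ₀‖ ^ 3 := by
  set B := ball (0 : EuclideanSpace ℝ (Fin d)) 1
  have hB : 0 < volume.real B :=
    ENNReal.toReal_pos (measure_ball_pos _ _ one_pos).ne' measure_ball_lt_top.ne
  refine ⟨M ^ 2 * 2 ^ d / volume.real B, by positivity, fun θ _ => ?_⟩
  set δ := ‖θ - θ₀‖
  set S := {x : EuclideanSpace ℝ (Fin d) | |⟪x, θ₀⟫| ≤ δ}
  have hS : MeasurableSet S := measurableSet_le (by fun_prop) measurable_const
  have henv : ∀ x ∈ B, h₀ x ^ 2 *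
      |(if 0 ≤ ⟪x, θ⟫ then (1 : ℝ) else 0) - (if 0 ≤ ⟪x, θ₀⟫ then (1 : ℝ) else 0)| ≤
        S.indicator (fun _ => (M * δ) ^ 2) x := fun x hx =>
    sq_mul_abs_ite_sub_ite_le_indicator hM.le
      (by simpa [hM.le] using abs_le_mul_abs_inner_of_lipschitzWith hlip hθ₀ hsign x)
      (mem_ball_zero_iff.1 hx).le
  have hslab : volume.real (S ∩ B) ≤ 2 ^ d * δ := ENNReal.toReal_le_of_le_ofReal (by positivity)
    (by rw [inter_comm]; exact volume_ball_inter_setOf_abs_inner_le hθ₀ δ)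
  rw [integral_smul_measure, ENNReal.toReal_inv, smul_eq_mul]
  calc (volume.real B)⁻¹ * ∫ x in B, _
        ≤ (volume.real B)⁻¹ * (volume.real (S ∩ B) * (M * δ) ^ 2) := by
        gcongr
        exact setIntegral_le_measureReal_inter_mul hS measurableSet_ball
          (measure_ne_top_of_subset inter_subset_right measure_ball_lt_top.ne)
          (fun x => by positivity) henv
    _ ≤ (volume.real B)⁻¹ * (2 ^ d * δ * (M * δ) ^ 2) := by gcongr
    _ = M ^ 2 * 2 ^ d / volume.real B * δ ^ 3 := by field_simp

/-- For `X` uniform on the open unit ball, `θ₀` a unit vector, and `h₀`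
measurable, bounded by `M`, `M`-Lipschitz, with `h₀(x) ≥ 0 ↔ x⬝θ₀ ≥ 0`, there is `C > 0`
such that for all `θ` with `‖θ − θ₀‖ ≤ 1`,
`E[h₀(X)² |𝟙{X⬝θ ≥ 0} − 𝟙{X⬝θ₀ ≥ 0}|] ≤ C ‖θ − θ₀‖³`. -/
theorem tsms_envelope_cubic_bound {d : ℕ} (M : ℝ) (hM : 0 < M)
    (θ₀ : EuclideanSpace ℝ (Fin d)) (hθ₀ : ‖θ₀‖ = 1)
    (h₀ : EuclideanSpace ℝ (Fin d) → ℝ) (hmeas : Measurable h₀)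
    (hbdd : ∀ x, |h₀ x| ≤ M)
    (hsign : ∀ x, 0 ≤ h₀ x ↔ 0 ≤ ⟪x, θ₀⟫)
    (hlip : LipschitzWith (Real.toNNReal M) h₀) :
    ∃ C : ℝ, 0 < C ∧ ∀ θ : EuclideanSpace ℝ (Fin d), ‖θ - θ₀‖ ≤ 1 →
      (∫ x, h₀ x ^ 2 *
          |(if 0 ≤ ⟪x, θ⟫ then (1 : ℝ) else 0) - (if 0 ≤ ⟪x, θ₀⟫ then (1 : ℝ) else 0)|
        ∂((volume (Metric.ball (0 : EuclideanSpace ℝ (Fin d)) 1))⁻¹ •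
            volume.restrict (Metric.ball (0 : EuclideanSpace ℝ (Fin d)) 1)))
        ≤ C * ‖θ - θ₀‖ ^ 3 :=
  tsms_envelope_cubic_bound_general M hM θ₀ hθ₀ h₀ hsign hlip
end
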